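/- Boundary vertices versus triangles: for every integer r ≥ 1, |V_ex(r)| + 3·|T(r)| ≤ 2·|V(r)| (i.e. |V_ex(r)| ≤ 2|V(r)| − 3|T(r)|). -/

import Mathlib

/-- Vertex set of the cellular interference graph: pairs `(a,b)` identified with
the Eisenstein integer `a + bω`, where `ω = (−1+i√3)/2`, satisfying
`|Re(a+bω)| ≤ r` and `|Im(a+bω)| ≤ (√3/2)r`, i.e. `|2a − b| ≤ 2r` and `|b| ≤ r`. -/
noncomputable def V (r : ℤ) : Finset (ℤ × ℤ) :=
  (Finset.Icc (-(2 * r)) (2 * r) ×ˢ Finset.Icc (-r) r).filter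
    (fun p => |2 * p.1 - p.2| ≤ 2 * r ∧ |p.2| ≤ r)

/-- `f(a,b) = (a+b) mod 3`. -/
def f (p : ℤ × ℤ) : ℤ := (p.1 + p.2) % 3

/-- Triangle index set: `(a,b)` with `f(a,b) ≠ 0` such that all three points
`(a,b)`, `(a,b+1)`, `(a+1,b+1)` lie in `V r`. -/
noncomputable def T (r : ℤ) : Finset (ℤ × ℤ) :=
  (V r).filter (fun p => f p ≠ 0 ∧ (p.1, p.2 + 1) ∈ V r ∧ (p.1 + 1, p.2 + 1) ∈ V r)

/-- The vertex set of the triangle indexed by `p = (a,b)`: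
`{(a,b), (a,b+1), (a+1,b+1)}`. -/
def triVerts (p : ℤ × ℤ) : Finset (ℤ × ℤ) := {p, (p.1, p.2 + 1), (p.1 + 1, p.2 + 1)}

/-- The number `n_v` of triangles of `T r` whose vertex set contains `v`. -/
noncomputable def nTri (r : ℤ) (v : ℤ × ℤ) : ℕ := ((T r).filter (fun p => v ∈ triVerts p)).card

/-- The boundary vertices: those belonging to fewer than two triangles. -/
noncomputable def Vex (r : ℤ) : Finset (ℤ × ℤ) := (V r).filter (fun v => nTri r v < 2)

/-!
Every triangle has three vertices in `V r`, so double counting gives `∑_{v ∈ V} n_v = 3 |T|`.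
A vertex `v` lies in at most the three triangles indexed by `v`, `v - (0,1)`, `v - (1,1)`,
whose values of `f` are pairwise distinct mod 3; one of them is therefore `0`, so `n_v ≤ 2`.
Hence `[n_v < 2] + n_v ≤ 2` for every `v`, and summing over `V` gives the claim.
-/

open Finset

@[simp]
lemma mem_triVerts {v p : ℤ × ℤ} :
    v ∈ triVerts p ↔ v = p ∨ v = (p.1, p.2 + 1) ∨ v = (p.1 + 1, p.2 + 1) := by
  simp [triVerts]

lemma card_triVerts (p : ℤ × ℤ) : #(triVerts p) = 3 := by
  rw [triVerts, card_insert_of_notMem, card_pair] <;> simp [Prod.ext_iff]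

lemma triVerts_subset_V {r : ℤ} {p : ℤ × ℤ} (hp : p ∈ T r) : triVerts p ⊆ V r := by
  simp only [T, mem_filter] at hp
  intro v hv
  rcases mem_triVerts.mp hv with rfl | rfl | rfl
  exacts [hp.1, hp.2.2.1, hp.2.2.2]

lemma f_mem_of_mem_T {r : ℤ} {p : ℤ × ℤ} (hp : p ∈ T r) : f p ∈ ({1, 2} : Finset ℤ) := by
  have hf : f p ≠ 0 := (mem_filter.mp hp).2.1
  simp only [f, mem_insert, mem_singleton] at hf ⊢
  omega

lemma eq_of_mem_triVerts_of_f_eq {v p q : ℤ × ℤ} (hp : v ∈ triVerts p) (hq : v ∈ triVerts q)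
    (hpq : f p = f q) : p = q := by
  simp only [f] at hpq
  rw [mem_triVerts] at hp hq
  rcases hp with rfl | rfl | rfl <;> rcases hq with h | h | h <;>
    simp only [Prod.ext_iff] at h ⊢ <;> omega

lemma nTri_le_two (r : ℤ) (v : ℤ × ℤ) : nTri r v ≤ 2 :=
  card_le_card_of_injOn f (fun _ hp => f_mem_of_mem_T (mem_filter.mp hp).1)
    (fun _ hp _ hq => eq_of_mem_triVerts_of_f_eq (mem_filter.mp hp).2 (mem_filter.mp hq).2)

lemma sum_nTri (r : ℤ) : ∑ v ∈ V r, nTri r v = 3 * #(T r) := by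
  calc ∑ v ∈ V r, nTri r v
      = ∑ p ∈ T r, #((V r).bipartiteBelow (fun v p => v ∈ triVerts p) p) :=
        sum_card_bipartiteAbove_eq_sum_card_bipartiteBelow _
    _ = ∑ _p ∈ T r, 3 := by
        refine sum_congr rfl fun p hp => ?_
        rw [bipartiteBelow, filter_mem_eq_inter, inter_eq_right.mpr (triVerts_subset_V hp),
          card_triVerts]
    _ = 3 * #(T r) := by rw [sum_const, smul_eq_mul, mul_comm]

theorem card_Vex_le_sub_general (r : ℤ) :
    (Vex r).card + 3 * (T r).card ≤ 2 * (V r).card := by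
  calc #(Vex r) + 3 * #(T r)
      = ∑ v ∈ V r, ((if nTri r v < 2 then 1 else 0) + nTri r v) := by
        rw [Vex, card_filter, ← sum_nTri, sum_add_distrib]
    _ ≤ ∑ _v ∈ V r, 2 :=
        sum_le_sum fun v _ => by have := nTri_le_two r v; split_ifs <;> omega
    _ = 2 * #(V r) := by rw [sum_const, smul_eq_mul, mul_comm]

/-- Boundary vertices versus triangles: `|V_ex(r)| + 3·|T(r)| ≤ 2·|V(r)|`,
i.e. `|V_ex(r)| ≤ 2|V(r)| − 3|T(r)|`. -/
theorem card_Vex_le_sub (r : ℤ) (hr : 1 ≤ r) :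
    (Vex r).card + 3 * (T r).card ≤ 2 * (V r).card :=
  card_Vex_le_sub_general r
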